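/- arXiv:1903.08539 — 2 statements merged into one kernel-verified Lean document; each statement's English description precedes it below -/
import Mathlib

section
/- Plaut's theorem (G-delta geodesic), κ = 0 case: Let L be a complete length metric space satisfying the CBB(0) comparison and let p ∈ L. Then there is a dense Gδ subset W ⊆ L such that for every q ∈ W there exists a geodesic from p to q, and this geodesic is unique: any two geodesics from p to q agree at every parameter t ∈ [0,1]. -/
/-- Comparison angle (model angle for curvature `0`) at `p` between `x` and `y`. -/
noncomputable def cmpAngle {X : Type*} [MetricSpace X] (p x y : X) : ℝ :=
  Real.arccos ((dist p x ^ 2 + dist p y ^ 2 - dist x y ^ 2) / (2 * dist p x * dist p y))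

/-- The CBB(0) four-point comparison: curvature `≥ 0` in the sense of Alexandrov. -/
def CBB0Cmp (X : Type*) [MetricSpace X] : Prop :=
  ∀ p x₁ x₂ x₃ : X, p ≠ x₁ → p ≠ x₂ → p ≠ x₃ →
    cmpAngle p x₁ x₂ + cmpAngle p x₂ x₃ + cmpAngle p x₃ x₁ ≤ 2 * Real.pi

/-- The CAT(0) four-point comparison. -/
def CAT0Cmp (X : Type*) [MetricSpace X] : Prop :=
  ∀ p₁ p₂ x₁ x₂ : X, p₁ ≠ p₂ → p₁ ≠ x₁ → p₁ ≠ x₂ → p₂ ≠ x₁ → p₂ ≠ x₂ →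
    cmpAngle p₁ x₁ x₂ ≤ cmpAngle p₁ p₂ x₁ + cmpAngle p₁ p₂ x₂ ∨
    cmpAngle p₂ x₁ x₂ ≤ cmpAngle p₂ p₁ x₁ + cmpAngle p₂ p₁ x₂

/-- Midpoint characterization of the length condition (for complete spaces). -/
def LengthMid (X : Type*) [MetricSpace X] : Prop :=
  ∀ x y : X, ∀ ε : ℝ, 0 < ε → ∃ z : X,
    dist x z ≤ dist x y / 2 + ε ∧ dist z y ≤ dist x y / 2 + ε

/-- A geodesic from `p` to `q`, affinely parametrized by `[0,1]`. -/
def IsGeodesicP {X : Type*} [MetricSpace X] (γ : ℝ → X) (p q : X) : Prop :=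
  γ 0 = p ∧ γ 1 = q ∧
    ∀ s ∈ Set.Icc (0:ℝ) 1, ∀ t ∈ Set.Icc (0:ℝ) 1, dist (γ s) (γ t) = |s - t| * dist p q

/-- A metrically convex subset: together with any two points it contains
every point lying between them. -/
def MConvexSet {X : Type*} [MetricSpace X] (K : Set X) : Prop :=
  ∀ x ∈ K, ∀ y ∈ K, ∀ z : X, dist x z + dist z y = dist x y → z ∈ K

/-!
Call `q` extendable beyond (as seen from `p`) if for every `θ > 0` some `r` satisfies
`|pq| + |qr| - |pr| < θ · min |qr| |pq|`. For fixed `θ` this is an open condition on `q`, and in a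
length space it holds densely away from `p` (for `q` on an almost-segment from `p` to a given point,
close to its end), so by Baire's theorem the extendable points together with `p` contain a dense Gδ.

At an extendable `q`, curvature `≥ 0` forbids branching: for `z, z'` almost on a segment from `p`
to `q` the comparison angles `∠̃(q; z, r)` and `∠̃(q; z', r)` are close to `π`, so the four-point
condition forces `∠̃(q; z, z')` to be close to `0`, i.e. `|zz'| ≈ ||qz| - |qz'||`. Hence
approximate `t`-points of `p, q`, which the midpoint property provides, form a Cauchy family whose
limit is an exact `t`-point; exact `t`-points are unique, and together they form the geodesic.
-/

open Real Set Metric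

lemma sq_pi_sub_le_of_cos_le {α η : ℝ} (h0 : 0 ≤ α) (hπ : α ≤ π) (hcos : cos α ≤ -1 + η) :
    (π - α) ^ 2 ≤ π ^ 2 / 2 * η := by
  have hbound := cos_le_one_sub_mul_cos_sq (x := π - α)
    (by rw [abs_of_nonneg (by linarith)]; linarith)
  rw [cos_pi_sub] at hbound
  have : 2 / π ^ 2 * (π - α) ^ 2 ≤ η := by linarith
  rw [div_mul_eq_mul_div, div_le_iff₀ (by positivity)] at this
  nlinarith [pi_pos]

lemma one_sub_cos_le_of_add_le_two_pi {γ α α' η η' : ℝ} (hγ : 0 ≤ γ)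
    (hα0 : 0 ≤ α) (hαπ : α ≤ π) (hα'0 : 0 ≤ α') (hα'π : α' ≤ π) (hsum : γ + α + α' ≤ 2 * π)
    (hcos : cos α ≤ -1 + η) (hcos' : cos α' ≤ -1 + η') :
    1 - cos γ ≤ π ^ 2 / 2 * (η + η') := by
  have hs := sq_pi_sub_le_of_cos_le hα0 hαπ hcos
  have hs' := sq_pi_sub_le_of_cos_le hα'0 hα'π hcos'
  have hγ2 : γ ^ 2 ≤ ((π - α) + (π - α')) ^ 2 := pow_le_pow_left₀ hγ (by linarith) 2
  nlinarith [one_sub_sq_div_two_le_cos (x := γ), sq_nonneg ((π - α) - (π - α'))]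

section

variable {X : Type*} [MetricSpace X]

def pathExcess (x y z : X) : ℝ := dist x y + dist y z - dist x z

lemma pathExcess_nonneg (x y z : X) : 0 ≤ pathExcess x y z := by
  unfold pathExcess; linarith [dist_triangle x y z]

lemma pathExcess_le_add (p z q r : X) :
    pathExcess z q r ≤ pathExcess p z q + pathExcess p q r := by
  unfold pathExcess; linarith [dist_triangle p z r]

lemma pathExcess_eq_zero_of_dist_eq_mul {p q z : X} {t : ℝ} (hp : dist p z = t * dist p q)
    (hq : dist q z = (1 - t) * dist p q) : pathExcess p z q = 0 := by
  unfold pathExcess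
  rw [dist_comm z q, hp, hq]
  ring

lemma cmpAngle_comm (p x y : X) : cmpAngle p x y = cmpAngle p y x := by
  unfold cmpAngle; rw [dist_comm x y, add_comm (dist p x ^ 2), mul_right_comm]

lemma cmpAngle_nonneg (p x y : X) : 0 ≤ cmpAngle p x y := arccos_nonneg _

lemma cmpAngle_le_pi (p x y : X) : cmpAngle p x y ≤ π := arccos_le_pi _

lemma cos_cmpAngle {p x y : X} (hx : p ≠ x) (hy : p ≠ y) :
    cos (cmpAngle p x y) =
      (dist p x ^ 2 + dist p y ^ 2 - dist x y ^ 2) / (2 * dist p x * dist p y) := by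
  have ha := dist_pos.2 hx
  have hb := dist_pos.2 hy
  have h1 := dist_triangle_left x y p
  have h2 := dist_triangle p x y
  have h3 := dist_triangle p y x
  rw [dist_comm y x] at h3
  apply cos_arccos
  · rw [le_div_iff₀ (by positivity)]; nlinarith [dist_nonneg (x := x) (y := y)]
  · rw [div_le_iff₀ (by positivity)]; nlinarith [dist_nonneg (x := x) (y := y)]

lemma dist_sq_eq_cmpAngle {p x y : X} (hx : p ≠ x) (hy : p ≠ y) :
    dist x y ^ 2 = dist p x ^ 2 + dist p y ^ 2
      - 2 * dist p x * dist p y * cos (cmpAngle p x y) := by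
  have ha := dist_pos.2 hx
  have hb := dist_pos.2 hy
  rw [cos_cmpAngle hx hy]
  field_simp
  ring

lemma cos_cmpAngle_le_of_pathExcess_le {p x y : X} {σ : ℝ} (hx : p ≠ x) (hy : p ≠ y)
    (hσ : pathExcess x p y ≤ σ) :
    cos (cmpAngle p x y) ≤ -1 + σ * (1 / dist p x + 1 / dist p y) := by
  have ha := dist_pos.2 hx
  have hb := dist_pos.2 hy
  have hxy := dist_triangle_left x y p
  unfold pathExcess at hσ
  rw [dist_comm x p] at hσ
  rw [cos_cmpAngle hx hy, div_le_iff₀ (by positivity)]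
  have : σ * (1 / dist p x + 1 / dist p y) * (2 * dist p x * dist p y) =
      2 * σ * (dist p x + dist p y) := by field_simp; ring
  rw [add_mul, this]
  nlinarith [dist_nonneg (x := x) (y := y)]

lemma CBB0Cmp.dist_sq_le_of_pathExcess_le (hcbb : CBB0Cmp X) {q z z' r : X} {σ : ℝ}
    (hr : q ≠ r) (h : pathExcess z q r ≤ σ) (h' : pathExcess z' q r ≤ σ) :
    dist z z' ^ 2 ≤ (dist q z - dist q z') ^ 2 +
      π ^ 2 * σ * (dist q z + dist q z' + 2 * dist q z * dist q z' / dist q r) := by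
  have hσ := (pathExcess_nonneg z q r).trans h
  rcases eq_or_ne q z with rfl | hz
  · simp only [dist_self, zero_sub, neg_sq, zero_add, zero_mul, mul_zero, zero_div, add_zero]
    nlinarith [mul_nonneg (mul_nonneg (sq_nonneg π) hσ) (dist_nonneg (x := q) (y := z'))]
  rcases eq_or_ne q z' with rfl | hz'
  · simp only [dist_self, sub_zero, add_zero, mul_zero, zero_div, dist_comm z q]
    nlinarith [mul_nonneg (mul_nonneg (sq_nonneg π) hσ) (dist_nonneg (x := q) (y := z))]
  have hsum := hcbb q z z' r hz hz' hr
  rw [cmpAngle_comm q r z] at hsum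
  have hcos := one_sub_cos_le_of_add_le_two_pi (cmpAngle_nonneg q z z')
    (cmpAngle_nonneg q z' r) (cmpAngle_le_pi q z' r) (cmpAngle_nonneg q z r)
    (cmpAngle_le_pi q z r) hsum (cos_cmpAngle_le_of_pathExcess_le hz' hr h')
    (cos_cmpAngle_le_of_pathExcess_le hz hr h)
  have ha := dist_pos.2 hz
  have hb := dist_pos.2 hz'
  have hc := dist_pos.2 hr
  have hscale : 2 * dist q z * dist q z' * (π ^ 2 / 2 *
      (σ * (1 / dist q z' + 1 / dist q r) + σ * (1 / dist q z + 1 / dist q r))) =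
      π ^ 2 * σ * (dist q z + dist q z' + 2 * dist q z * dist q z' / dist q r) := by
    field_simp; ring
  rw [dist_sq_eq_cmpAngle hz hz', ← hscale]
  nlinarith [mul_le_mul_of_nonneg_left hcos (by positivity : 0 ≤ 2 * dist q z * dist q z')]

lemma CBB0Cmp.dist_sq_le_of_near_segment (hcbb : CBB0Cmp X) {p q r z z' : X} {A δ θ : ℝ}
    (hr : q ≠ r) (hθ : 0 ≤ θ) (hqr : pathExcess p q r ≤ θ * min (dist q r) (dist p q))
    (hz : pathExcess p z q ≤ δ) (hz' : pathExcess p z' q ≤ δ)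
    (hzA : dist q z ≤ A) (hz'A : dist q z' ≤ A) :
    dist z z' ^ 2 ≤ (dist q z - dist q z') ^ 2 + π ^ 2 * (2 * A + 2 * A ^ 2 / dist q r) * δ
      + π ^ 2 * (2 * A * dist p q + 2 * A ^ 2) * θ := by
  set c := dist q r
  set m := min c (dist p q)
  have hc : 0 < c := dist_pos.2 hr
  have hA : 0 ≤ A := dist_nonneg.trans hzA
  have hδ : 0 ≤ δ := (pathExcess_nonneg p z q).trans hz
  have hσ : ∀ w, pathExcess p w q ≤ δ → pathExcess w q r ≤ δ + θ * m := fun w hw =>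
    (pathExcess_le_add p w q r).trans (by linarith)
  have hcmp := hcbb.dist_sq_le_of_pathExcess_le hr (hσ z hz) (hσ z' hz')
  have hAc : 0 ≤ 2 * A + 2 * A ^ 2 / c := add_nonneg (by linarith) (by positivity)
  have hab : dist q z + dist q z' + 2 * dist q z * dist q z' / c ≤ 2 * A + 2 * A ^ 2 / c := by
    have h2 : 2 * dist q z * dist q z' ≤ 2 * A ^ 2 := by
      nlinarith [dist_nonneg (x := q) (y := z'), dist_nonneg (x := q) (y := z)]
    linarith [div_le_div_of_nonneg_right h2 hc.le]
  have hm : m * (2 * A + 2 * A ^ 2 / c) ≤ 2 * A * dist p q + 2 * A ^ 2 := by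
    have hmc : m / c ≤ 1 := div_le_one_of_le₀ (min_le_left _ _) hc.le
    have hmD : m ≤ dist p q := min_le_right _ _
    have : m * (2 * A + 2 * A ^ 2 / c) = 2 * A * m + 2 * A ^ 2 * (m / c) := by ring
    rw [this]
    nlinarith [mul_le_mul_of_nonneg_left hmc (by positivity : 0 ≤ 2 * A ^ 2),
      mul_le_mul_of_nonneg_left hmD (by linarith : 0 ≤ 2 * A)]
  have hm0 : 0 ≤ m := le_min hc.le dist_nonneg
  calc dist z z' ^ 2
      ≤ (dist q z - dist q z') ^ 2 + π ^ 2 * (δ + θ * m) * (2 * A + 2 * A ^ 2 / c) :=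
        hcmp.trans (by gcongr)
    _ = (dist q z - dist q z') ^ 2 + π ^ 2 * (2 * A + 2 * A ^ 2 / c) * δ
          + π ^ 2 * θ * (m * (2 * A + 2 * A ^ 2 / c)) := by ring
    _ ≤ _ := by
        have := mul_le_mul_of_nonneg_left hm (by positivity : 0 ≤ π ^ 2 * θ)
        linarith

def extendableSet (p : X) (θ : ℝ) : Set X :=
  {q | ∃ r, pathExcess p q r < θ * min (dist q r) (dist p q)}

def ExtendableBeyond (p q : X) : Prop := ∀ θ > 0, q ∈ extendableSet p θ

lemma extendableSet_mono (p : X) {θ θ' : ℝ} (h : θ ≤ θ') :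
    extendableSet p θ ⊆ extendableSet p θ' := fun _ ⟨r, hr⟩ =>
  ⟨r, hr.trans_le (mul_le_mul_of_nonneg_right h (le_min dist_nonneg dist_nonneg))⟩

lemma isOpen_extendableSet (p : X) (θ : ℝ) : IsOpen (extendableSet p θ) := by
  simp only [extendableSet, ofPred_exists]
  exact isOpen_iUnion fun r => isOpen_lt (by unfold pathExcess; fun_prop) (by fun_prop)

lemma ne_of_pathExcess_lt {p q r : X} {θ : ℝ}
    (h : pathExcess p q r < θ * min (dist q r) (dist p q)) : q ≠ r := by
  rintro rfl
  simp only [dist_self, min_eq_left dist_nonneg, mul_zero] at h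
  exact h.not_ge (pathExcess_nonneg p q q)

lemma ExtendableBeyond.exists_dist_le_of_pathExcess_le (hcbb : CBB0Cmp X) {p q : X}
    (hext : ExtendableBeyond p q) {ε : ℝ} (hε : 0 < ε) :
    ∃ δ > 0, ∀ z z' : X, pathExcess p z q ≤ δ → pathExcess p z' q ≤ δ →
      dist z z' ≤ |dist q z - dist q z'| + ε := by
  set A := dist p q + 1 with hA
  have hε2 : 0 < ε ^ 2 / 2 := by positivity
  obtain ⟨θ, hθ, hθε⟩ := exists_pos_mul_lt hε2 (π ^ 2 * (2 * A * dist p q + 2 * A ^ 2))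
  obtain ⟨r, hr⟩ := hext θ hθ
  obtain ⟨δ, hδ, hδε⟩ := exists_pos_mul_lt hε2 (π ^ 2 * (2 * A + 2 * A ^ 2 / dist q r))
  refine ⟨min δ 1, by positivity, fun z z' hz hz' => ?_⟩
  have hdistA : ∀ w : X, pathExcess p w q ≤ min δ 1 → dist q w ≤ A := fun w hw => by
    unfold pathExcess at hw
    linarith [min_le_right δ 1, dist_nonneg (x := p) (y := w), dist_comm q w]
  have hsq := hcbb.dist_sq_le_of_near_segment (ne_of_pathExcess_lt hr) hθ.le hr.le hz hz'
    (hdistA z hz) (hdistA z' hz')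
  have hδ' : π ^ 2 * (2 * A + 2 * A ^ 2 / dist q r) * min δ 1 ≤
      π ^ 2 * (2 * A + 2 * A ^ 2 / dist q r) * δ := by gcongr; exact min_le_left _ _
  rw [← sq_abs (dist q z - dist q z')] at hsq
  nlinarith [abs_nonneg (dist q z - dist q z'), dist_nonneg (x := z) (y := z')]

lemma ExtendableBeyond.dist_le_of_pathExcess_eq_zero (hcbb : CBB0Cmp X) {p q : X}
    (hext : ExtendableBeyond p q) {z z' : X} (hz : pathExcess p z q = 0)
    (hz' : pathExcess p z' q = 0) : dist z z' ≤ |dist q z - dist q z'| := by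
  refine le_of_forall_pos_le_add fun ε hε => ?_
  obtain ⟨δ, hδ, hnear⟩ := hext.exists_dist_le_of_pathExcess_le hcbb hε
  exact hnear z z' (hz.trans_le hδ.le) (hz'.trans_le hδ.le)

lemma extendableBeyond_of_mem_iInter {p q : X}
    (hq : q ∈ ⋂ n : ℕ, ball p (1 / ((n : ℝ) + 1)) ∪ extendableSet p (1 / ((n : ℝ) + 1)))
    (hpq : p ≠ q) : ExtendableBeyond p q := by
  intro θ hθ
  obtain ⟨n, hn⟩ := exists_nat_one_div_lt (lt_min hθ (dist_pos.2 hpq))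
  rcases mem_iInter.1 hq n with h | h
  · exact absurd (mem_ball'.1 h) (not_lt.2 (hn.le.trans (min_le_right _ _)))
  · exact extendableSet_mono p (hn.le.trans (min_le_left _ _)) h

lemma LengthMid.exists_dist_le_add_div_pow (hlen : LengthMid X) (k : ℕ) :
    ∀ (x y : X) {t ε : ℝ}, 0 ≤ t → t ≤ 1 → 0 < ε → ∃ z : X,
      dist x z ≤ t * dist x y + dist x y / 2 ^ k + ε ∧
      dist z y ≤ (1 - t) * dist x y + dist x y / 2 ^ k + ε := by
  induction k with
  | zero =>
    intro x y t ε ht0 ht1 hε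
    refine ⟨x, ?_, ?_⟩ <;> simp only [dist_self, pow_zero, div_one] <;>
      nlinarith [dist_nonneg (x := x) (y := y)]
  | succ k ih =>
    have half : ∀ (x y : X) {t ε : ℝ}, 0 ≤ t → t ≤ 1 / 2 → 0 < ε → ∃ z : X,
        dist x z ≤ t * dist x y + dist x y / 2 ^ (k + 1) + ε ∧
        dist z y ≤ (1 - t) * dist x y + dist x y / 2 ^ (k + 1) + ε := by
      intro x y t ε ht0 ht1 hε
      obtain ⟨m, hxm, hmy⟩ := hlen x y (ε / 4) (by positivity)
      obtain ⟨z, hxz, hzm⟩ := ih x m (t := 2 * t) (ε := ε / 4) (by linarith) (by linarith)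
        (by positivity)
      have hpow : dist x m / 2 ^ k ≤ dist x y / 2 ^ (k + 1) + ε / 4 := by
        have h1 : ε / 4 / 2 ^ k ≤ ε / 4 := div_le_self (by positivity) (one_le_pow₀ one_le_two)
        calc dist x m / 2 ^ k ≤ (dist x y / 2 + ε / 4) / 2 ^ k := by gcongr
          _ = dist x y / 2 ^ (k + 1) + ε / 4 / 2 ^ k := by rw [pow_succ]; ring
          _ ≤ dist x y / 2 ^ (k + 1) + ε / 4 := by linarith
      have h2t : 2 * t * dist x m ≤ t * dist x y + ε / 4 := by nlinarith
      have h12t : (1 - 2 * t) * dist x m ≤ (1 - 2 * t) * (dist x y / 2) + ε / 4 := by nlinarith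
      refine ⟨z, by linarith, ?_⟩
      linarith [dist_triangle z m y]
    intro x y t ε ht0 ht1 hε
    rcases le_total t (1 / 2) with ht | ht
    · exact half x y ht0 ht hε
    · obtain ⟨z, hyz, hzx⟩ := half y x (t := 1 - t) (by linarith) (by linarith) hε
      rw [dist_comm y x, dist_comm y z] at hyz
      rw [dist_comm y x, dist_comm z x] at hzx
      exact ⟨z, by linarith, by linarith⟩

lemma LengthMid.exists_dist_le (hlen : LengthMid X) (x y : X) {t : ℝ} (ht0 : 0 ≤ t)
    (ht1 : t ≤ 1) {ε : ℝ} (hε : 0 < ε) :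
    ∃ z : X, dist x z ≤ t * dist x y + ε ∧ dist z y ≤ (1 - t) * dist x y + ε := by
  obtain ⟨k, hk⟩ := pow_unbounded_of_one_lt (dist x y / (ε / 2)) one_lt_two
  have hdiv : dist x y / 2 ^ k ≤ ε / 2 := by
    rw [div_lt_iff₀ (by positivity)] at hk
    rw [div_le_iff₀ (by positivity)]
    linarith
  obtain ⟨z, hxz, hzy⟩ := hlen.exists_dist_le_add_div_pow k x y ht0 ht1 (half_pos hε)
  exact ⟨z, by linarith, by linarith⟩

lemma LengthMid.dense_ball_union_extendableSet (hlen : LengthMid X) (p : X) {θ : ℝ}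
    (hθ : 0 < θ) : Dense (ball p θ ∪ extendableSet p θ) := by
  rw [Metric.dense_iff]
  intro x ε hε
  by_cases hx : dist p x < θ
  · exact ⟨x, mem_ball_self hε, Or.inl (mem_ball'.2 hx)⟩
  set D := dist p x
  have hD : 0 < D := by linarith
  set c := min ε D / 2 with hc_def
  have hc : 0 < c := by positivity
  have hcε : c ≤ ε / 2 := by linarith [min_le_left ε D]
  have hcD : 2 * c ≤ D := by linarith [min_le_right ε D]
  set η := min θ 1 * c / 4 with hη_def
  have hη : 0 < η := by positivity
  have hηc : η ≤ c / 4 := by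
    have := mul_le_mul_of_nonneg_right (min_le_right θ 1) hc.le
    linarith
  have hηθ : η ≤ θ * c / 4 := by
    have := mul_le_mul_of_nonneg_right (min_le_left θ 1) hc.le
    linarith
  obtain ⟨z, hpz, hzx⟩ := hlen.exists_dist_le p x (t := 1 - c / D)
    (by rw [sub_nonneg, div_le_one hD]; linarith) (by linarith [div_pos hc hD]) hη
  have hDc : (1 - c / D) * D = D - c := by field_simp
  have hc' : (1 - (1 - c / D)) * D = c := by field_simp; ring
  rw [hDc] at hpz
  rw [hc'] at hzx
  have htri := dist_triangle p z x
  refine ⟨z, mem_ball.2 (by linarith), Or.inr ⟨x, ?_⟩⟩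
  have hmin : 3 * c / 4 ≤ min (dist z x) (dist p z) := le_min (by linarith) (by linarith)
  calc pathExcess p z x ≤ 2 * η := by unfold pathExcess; linarith
    _ < θ * (3 * c / 4) := by nlinarith
    _ ≤ θ * min (dist z x) (dist p z) := mul_le_mul_of_nonneg_left hmin hθ.le

lemma ExtendableBeyond.exists_dist_eq_mul [CompleteSpace X] (hlen : LengthMid X)
    (hcbb : CBB0Cmp X) {p q : X} (hext : ExtendableBeyond p q) {t : ℝ} (ht0 : 0 ≤ t)
    (ht1 : t ≤ 1) : ∃ w : X, dist p w = t * dist p q ∧ dist q w = (1 - t) * dist p q := by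
  set η : ℕ → ℝ := fun n => 1 / ((n : ℝ) + 1)
  choose z hzp hzq using fun n : ℕ => hlen.exists_dist_le p q ht0 ht1 (ε := η n) (by positivity)
  have hqz : ∀ n, dist q (z n) ≤ (1 - t) * dist p q + η n := fun n => dist_comm q (z n) ▸ hzq n
  have hqz' : ∀ n, (1 - t) * dist p q - η n ≤ dist q (z n) := fun n => by
    linarith [dist_triangle_right p q (z n), hzp n]
  have hcauchy : CauchySeq z := by
    rw [Metric.cauchySeq_iff']
    intro ε hε
    obtain ⟨δ, hδ, hnear⟩ := hext.exists_dist_le_of_pathExcess_le hcbb (half_pos hε)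
    obtain ⟨N, hN⟩ := exists_nat_one_div_lt (lt_min (half_pos hδ) (by positivity : 0 < ε / 4))
    have hηN : η N < δ / 2 ∧ η N < ε / 4 := lt_min_iff.1 hN
    have hexcess : ∀ n, N ≤ n → pathExcess p (z n) q ≤ δ := fun n hn => by
      have : η n ≤ η N := Nat.one_div_le_one_div hn
      unfold pathExcess
      linarith [hzp n, hzq n, dist_nonneg (x := p) (y := q)]
    refine ⟨N, fun n hn => (hnear _ _ (hexcess n hn) (hexcess N le_rfl)).trans_lt ?_⟩
    have : η n ≤ η N := Nat.one_div_le_one_div hn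
    have := abs_sub_le_iff.2 (⟨by linarith [hqz n, hqz' N], by linarith [hqz N, hqz' n]⟩ :
      dist q (z n) - dist q (z N) ≤ 2 * η N ∧ dist q (z N) - dist q (z n) ≤ 2 * η N)
    linarith
  obtain ⟨w, hw⟩ := cauchySeq_tendsto_of_complete hcauchy
  have hη : Filter.Tendsto η Filter.atTop (nhds 0) := tendsto_one_div_add_atTop_nhds_zero_nat
  have hlim : ∀ (a : X) (c : ℝ), (∀ n, dist a (z n) ≤ c + η n) → dist a w ≤ c :=
    fun a c h => le_of_tendsto_of_tendsto' (tendsto_const_nhds.dist hw)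
      (by simpa using (tendsto_const_nhds (x := c)).add hη) h
  have hpw := hlim p _ hzp
  have hqw := hlim q _ hqz
  have := dist_triangle_right p q w
  exact ⟨w, by linarith, by linarith⟩

lemma IsGeodesicP.dist_left {γ : ℝ → X} {p q : X} (hγ : IsGeodesicP γ p q) {t : ℝ}
    (ht : t ∈ Icc (0 : ℝ) 1) : dist p (γ t) = t * dist p q := by
  have := hγ.2.2 0 ⟨le_rfl, zero_le_one⟩ t ht
  rwa [hγ.1, zero_sub, abs_neg, abs_of_nonneg ht.1] at this

lemma IsGeodesicP.dist_right {γ : ℝ → X} {p q : X} (hγ : IsGeodesicP γ p q) {t : ℝ}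
    (ht : t ∈ Icc (0 : ℝ) 1) : dist q (γ t) = (1 - t) * dist p q := by
  have := hγ.2.2 1 ⟨zero_le_one, le_rfl⟩ t ht
  rwa [hγ.2.1, abs_of_nonneg (sub_nonneg.2 ht.2)] at this

lemma isGeodesicP_of_dist_eq {γ : ℝ → X} {p q : X}
    (hp : ∀ t ∈ Icc (0 : ℝ) 1, dist p (γ t) = t * dist p q)
    (hq : ∀ t ∈ Icc (0 : ℝ) 1, dist q (γ t) = (1 - t) * dist p q)
    (hle : ∀ s ∈ Icc (0 : ℝ) 1, ∀ t ∈ Icc (0 : ℝ) 1,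
      dist (γ s) (γ t) ≤ |dist q (γ s) - dist q (γ t)|) :
    IsGeodesicP γ p q := by
  have hqq : ∀ s ∈ Icc (0 : ℝ) 1, ∀ t ∈ Icc (0 : ℝ) 1,
      |dist q (γ s) - dist q (γ t)| = |s - t| * dist p q := fun s hs t ht => by
    rw [hq s hs, hq t ht, ← sub_mul, abs_mul, abs_of_nonneg dist_nonneg, abs_sub_comm]
    ring_nf
  refine ⟨?_, ?_, fun s hs t ht => le_antisymm ((hle s hs t ht).trans_eq (hqq s hs t ht)) ?_⟩
  · have := hp 0 ⟨le_rfl, zero_le_one⟩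
    rw [zero_mul] at this
    exact (dist_eq_zero.1 this).symm
  · have := hq 1 ⟨zero_le_one, le_rfl⟩
    rw [sub_self, zero_mul] at this
    exact (dist_eq_zero.1 this).symm
  · rw [← hqq s hs t ht, dist_comm q, dist_comm q]
    exact abs_dist_sub_le _ _ _

def HasUniqueGeodesic (p q : X) : Prop :=
  (∃ γ : ℝ → X, IsGeodesicP γ p q) ∧
    ∀ γ₁ γ₂ : ℝ → X, IsGeodesicP γ₁ p q → IsGeodesicP γ₂ p q →
      ∀ t ∈ Icc (0 : ℝ) 1, γ₁ t = γ₂ t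

lemma hasUniqueGeodesic_self (p : X) : HasUniqueGeodesic p p := by
  refine ⟨⟨fun _ => p, rfl, rfl, fun s _ t _ => by simp⟩, fun γ₁ γ₂ h₁ h₂ t ht => ?_⟩
  have h₁p := h₁.dist_left ht
  have h₂p := h₂.dist_left ht
  rw [dist_self, mul_zero, dist_eq_zero] at h₁p h₂p
  rw [← h₁p, ← h₂p]

lemma ExtendableBeyond.hasUniqueGeodesic [CompleteSpace X] (hlen : LengthMid X)
    (hcbb : CBB0Cmp X) {p q : X} (hext : ExtendableBeyond p q) : HasUniqueGeodesic p q := by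
  choose f hfp hfq using fun t : Icc (0 : ℝ) 1 => hext.exists_dist_eq_mul hlen hcbb t.2.1 t.2.2
  set γ : ℝ → X := fun t => f (projIcc 0 1 zero_le_one t)
  have hγp : ∀ t ∈ Icc (0 : ℝ) 1, dist p (γ t) = t * dist p q := fun t ht => by
    simp only [γ, projIcc_of_mem _ ht]; exact hfp _
  have hγq : ∀ t ∈ Icc (0 : ℝ) 1, dist q (γ t) = (1 - t) * dist p q := fun t ht => by
    simp only [γ, projIcc_of_mem _ ht]; exact hfq _
  refine ⟨⟨γ, isGeodesicP_of_dist_eq hγp hγq fun s hs t ht => ?_⟩, fun γ₁ γ₂ h₁ h₂ t ht => ?_⟩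
  · exact hext.dist_le_of_pathExcess_eq_zero hcbb
      (pathExcess_eq_zero_of_dist_eq_mul (hγp s hs) (hγq s hs))
      (pathExcess_eq_zero_of_dist_eq_mul (hγp t ht) (hγq t ht))
  · have := hext.dist_le_of_pathExcess_eq_zero hcbb
      (pathExcess_eq_zero_of_dist_eq_mul (h₁.dist_left ht) (h₁.dist_right ht))
      (pathExcess_eq_zero_of_dist_eq_mul (h₂.dist_left ht) (h₂.dist_right ht))
    rw [h₁.dist_right ht, h₂.dist_right ht, sub_self, abs_zero] at this
    exact dist_le_zero.1 this

end

theorem plaut_gdelta_geodesic {L : Type*} [MetricSpace L] [CompleteSpace L]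
    (hlen : LengthMid L) (hcbb : CBB0Cmp L) (p : L) :
    ∃ W : Set L, Dense W ∧ IsGδ W ∧ ∀ q ∈ W,
      (∃ γ : ℝ → L, IsGeodesicP γ p q) ∧
      (∀ γ₁ γ₂ : ℝ → L, IsGeodesicP γ₁ p q → IsGeodesicP γ₂ p q →
        ∀ t ∈ Set.Icc (0:ℝ) 1, γ₁ t = γ₂ t) := by
  set U : ℕ → Set L := fun n => ball p (1 / ((n : ℝ) + 1)) ∪ extendableSet p (1 / ((n : ℝ) + 1))
  have hU : ∀ n, IsOpen (U n) := fun n => isOpen_ball.union (isOpen_extendableSet p _)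
  refine ⟨⋂ n, U n, dense_iInter_of_isOpen hU fun n =>
    hlen.dense_ball_union_extendableSet p Nat.one_div_pos_of_nat, .iInter_of_isOpen hU,
    fun q hq => ?_⟩
  rcases eq_or_ne p q with rfl | hpq
  · exact hasUniqueGeodesic_self p
  · exact (extendableBeyond_of_mem_iInter hq hpq).hasUniqueGeodesic hlen hcbb
end

section
/- Closest-point projection lemma, κ = 0 case: Let U be a complete length metric space satisfying the CAT(0) comparison and let K ⊆ U be a nonempty, closed, convex subset. Then for every point p ∈ U there exists a unique point z ∈ K that minimizes the distance to p, i.e. a unique z ∈ K with dist(p, z) = infDist(p, K). -/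
open Filter Topology Complex

theorem Complex.dist_ofReal_mul_exp_sq (r s φ ψ : ℝ) :
    dist (r * exp (φ * I)) (s * exp (ψ * I)) ^ 2 =
      r ^ 2 + s ^ 2 - 2 * r * s * Real.cos (φ - ψ) := by
  rw [Complex.dist_eq, Complex.sq_norm, Complex.normSq_apply]
  simp only [sub_re, sub_im, re_ofReal_mul, im_ofReal_mul, exp_ofReal_mul_I_re,
    exp_ofReal_mul_I_im, Real.cos_sub]
  linear_combination r ^ 2 * Real.sin_sq_add_cos_sq φ + s ^ 2 * Real.sin_sq_add_cos_sq ψ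

theorem Complex.dist_zero_ofReal_mul_exp {r : ℝ} (hr : 0 ≤ r) (φ : ℝ) :
    dist 0 (r * exp (φ * I)) = r := by
  simp [hr]

def approxMidpoints {α : Type*} [MetricSpace α] (x y : α) (ε : ℝ) : Set α :=
  {z | dist x z ≤ dist x y / 2 + ε ∧ dist z y ≤ dist x y / 2 + ε}

section Euclidean

variable {V : Type*} [NormedAddCommGroup V] [InnerProductSpace ℝ V]

theorem dist_midpoint_sq_le_of_mem_approxMidpoints {x y w : V} {ε : ℝ}
    (hw : w ∈ approxMidpoints x y ε) :
    dist w (midpoint ℝ x y) ^ 2 ≤ dist x y * ε + ε ^ 2 := by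
  have hx : dist w x ^ 2 ≤ (dist x y / 2 + ε) ^ 2 := by
    rw [dist_comm]
    exact pow_le_pow_left₀ dist_nonneg hw.1 2
  have hy : dist w y ^ 2 ≤ (dist x y / 2 + ε) ^ 2 := pow_le_pow_left₀ dist_nonneg hw.2 2
  have := EuclideanGeometry.dist_sq_add_dist_sq_eq_two_mul_dist_midpoint_sq_add_half_dist_sq w x y
  nlinarith

theorem dist_sq_eq_of_dist_le_half {x y z : V} (hx : dist z x ≤ dist x y / 2)
    (hy : dist z y ≤ dist x y / 2) (w : V) :
    dist w z ^ 2 = (dist w x ^ 2 + dist w y ^ 2) / 2 - dist x y ^ 2 / 4 := by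
  have hz : z = midpoint ℝ x y := by
    have := dist_triangle_left x y z
    exact eq_midpoint_of_dist_eq_half (by rw [dist_comm]; linarith) (by linarith)
  have := EuclideanGeometry.dist_sq_add_dist_sq_eq_two_mul_dist_midpoint_sq_add_half_dist_sq w x y
  rw [hz]
  linarith

end Euclidean

theorem exists_forall_mem_of_dist_le {α : Type*} [MetricSpace α] [CompleteSpace α]
    {S : ℝ → Set α} {f : ℝ → ℝ} (hS : Monotone S) (hcl : ∀ δ, IsClosed (S δ))
    (hne : ∀ δ > 0, (S δ).Nonempty) (hdist : ∀ δ > 0, ∀ z ∈ S δ, ∀ z' ∈ S δ, dist z z' ≤ f δ)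
    (hf : Tendsto f (𝓝[>] 0) (𝓝 0)) :
    ∃ z, ∀ δ > 0, z ∈ S δ := by
  set u : ℕ → ℝ := fun n => 1 / (n + 1)
  have hu_pos (n : ℕ) : 0 < u n := Nat.one_div_pos_of_nat
  have hu : Tendsto u atTop (𝓝[>] 0) :=
    tendsto_nhdsWithin_iff.mpr ⟨tendsto_one_div_add_atTop_nhds_zero_nat, .of_forall hu_pos⟩
  choose z hz using fun n => hne (u n) (hu_pos n)
  have hzS {N n : ℕ} (h : N ≤ n) : z n ∈ S (u N) :=
    hS (Nat.one_div_le_one_div h) (hz n)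
  have hcauchy : CauchySeq z := by
    refine Metric.cauchySeq_iff'.mpr fun η hη => ?_
    obtain ⟨N, hN⟩ := ((hf.comp hu).eventually (gt_mem_nhds hη)).exists
    exact ⟨N, fun n hn => (hdist _ (hu_pos N) _ (hzS hn) _ (hz N)).trans_lt hN⟩
  obtain ⟨z₀, hz₀⟩ := cauchySeq_tendsto_of_complete hcauchy
  refine ⟨z₀, fun δ hδ => (hcl δ).mem_of_tendsto hz₀ ?_⟩
  filter_upwards [hu.eventually (Ioo_mem_nhdsGT hδ)] with n hn
  exact hS hn.2.le (hz n)

section CAT0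

variable {α : Type*} [MetricSpace α]

-- With the junk value `x / 0 = 0` every degenerate comparison angle is `π / 2`, so the comparison
-- holds trivially for degenerate quadruples.
theorem cmpAngle_self_left (p y : α) : cmpAngle p p y = Real.pi / 2 := by
  simp [cmpAngle]

theorem cmpAngle_self_right (p x : α) : cmpAngle p x p = Real.pi / 2 := by
  simp [cmpAngle]

theorem law_cos_cmpAngle (p x y : α) :
    dist x y ^ 2 =
      dist p x ^ 2 + dist p y ^ 2 - 2 * dist p x * dist p y * Real.cos (cmpAngle p x y) := by
  rcases eq_or_ne p x with rfl | hpx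
  · simp
  rcases eq_or_ne p y with rfl | hpy
  · simp [dist_comm]
  have hx : 0 < dist p x := dist_pos.mpr hpx
  have hy : 0 < dist p y := dist_pos.mpr hpy
  have t₁ := dist_triangle_left x y p
  have t₂ := dist_triangle p x y
  have t₃ := dist_triangle p y x
  rw [dist_comm y x] at t₃
  rw [cmpAngle, Real.cos_arccos]
  · field_simp
    ring
  · rw [le_div_iff₀ (by positivity)]; nlinarith
  · rw [div_le_iff₀ (by positivity)]; nlinarith

theorem CAT0Cmp.cmpAngle_le_or (hcat : CAT0Cmp α) (p q x y : α) :
    cmpAngle p x y ≤ cmpAngle p q x + cmpAngle p q y ∨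
      cmpAngle q x y ≤ cmpAngle q p x + cmpAngle q p y := by
  have h₀ (a b c : α) : 0 ≤ cmpAngle a b c := Real.arccos_nonneg _
  have hπ (a b c : α) : cmpAngle a b c ≤ Real.pi := Real.arccos_le_pi _
  by_cases hpq : p = q
  · subst hpq
    left
    rw [cmpAngle_self_left, cmpAngle_self_left]
    linarith [hπ p x y]
  by_cases hpx : p = x
  · subst hpx; left; rw [cmpAngle_self_left, cmpAngle_self_right]; linarith [h₀ p q y]
  by_cases hpy : p = y
  · subst hpy; left; rw [cmpAngle_self_right, cmpAngle_self_right]; linarith [h₀ p q x]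
  by_cases hqx : q = x
  · subst hqx; right; rw [cmpAngle_self_left, cmpAngle_self_right]; linarith [h₀ q p y]
  by_cases hqy : q = y
  · subst hqy; right; rw [cmpAngle_self_right, cmpAngle_self_right]; linarith [h₀ q p x]
  exact hcat p q x y hpq hpx hpy hqx hqy

def PlanarModel (p q x y : α) : Prop :=
  ∃ p' q' x' y' : ℂ, dist p' q' = dist p q ∧ dist p' x' = dist p x ∧ dist p' y' = dist p y ∧
    dist x' y' = dist x y ∧ dist q' x' ≤ dist q x ∧ dist q' y' ≤ dist q y

theorem planarModel_of_cmpAngle_le {p q x y : α}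
    (h : cmpAngle p x y ≤ cmpAngle p q x + cmpAngle p q y) : PlanarModel p q x y := by
  set θ := cmpAngle p x y
  set φ := min (cmpAngle p q x) θ
  have hφ₀ : 0 ≤ φ := le_min (Real.arccos_nonneg _) (Real.arccos_nonneg _)
  have hφθ : φ ≤ θ := min_le_right _ _
  have hθφ : θ - φ ≤ cmpAngle p q y := by
    simp only [φ]
    have hβ₂ : 0 ≤ cmpAngle p q y := Real.arccos_nonneg _
    rcases min_cases (cmpAngle p q x) θ with ⟨hφ, -⟩ | ⟨hφ, -⟩ <;> rw [hφ] <;> linarith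
  have hd := dist_nonneg (x := p) (y := q)
  have hr₁ := dist_nonneg (x := p) (y := x)
  have hr₂ := dist_nonneg (x := p) (y := y)
  have hcos₁ : Real.cos (cmpAngle p q x) ≤ Real.cos (φ - 0) := by
    rw [sub_zero]
    exact Real.cos_le_cos_of_nonneg_of_le_pi hφ₀ (Real.arccos_le_pi _) (min_le_left _ _)
  have hcos₂ : Real.cos (cmpAngle p q y) ≤ Real.cos (φ - θ) := by
    rw [← Real.cos_neg (φ - θ), neg_sub]
    exact Real.cos_le_cos_of_nonneg_of_le_pi (by linarith) (Real.arccos_le_pi _) hθφ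
  refine ⟨0, dist p q * exp (φ * I), dist p x * exp ((0 : ℝ) * I), dist p y * exp (θ * I),
    dist_zero_ofReal_mul_exp hd _, dist_zero_ofReal_mul_exp hr₁ _,
    dist_zero_ofReal_mul_exp hr₂ _, ?_, ?_, ?_⟩
  · rw [← sq_eq_sq₀ dist_nonneg dist_nonneg, dist_ofReal_mul_exp_sq, zero_sub, Real.cos_neg,
      law_cos_cmpAngle p x y]
  · rw [← pow_le_pow_iff_left₀ dist_nonneg dist_nonneg two_ne_zero, dist_ofReal_mul_exp_sq,
      law_cos_cmpAngle p q x]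
    gcongr
  · rw [← pow_le_pow_iff_left₀ dist_nonneg dist_nonneg two_ne_zero, dist_ofReal_mul_exp_sq,
      law_cos_cmpAngle p q y]
    gcongr

theorem CAT0Cmp.planarModel (hcat : CAT0Cmp α) (p q x y : α) :
    PlanarModel p q x y ∨ PlanarModel q p x y :=
  (hcat.cmpAngle_le_or p q x y).imp planarModel_of_cmpAngle_le planarModel_of_cmpAngle_le

theorem CAT0Cmp.dist_sq_le_of_midpoint (hcat : CAT0Cmp α) {x y z : α}
    (hxz : dist x z = dist x y / 2) (hzy : dist z y = dist x y / 2) (p : α) :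
    dist p z ^ 2 ≤ (dist p x ^ 2 + dist p y ^ 2) / 2 - dist x y ^ 2 / 4 := by
  rcases hcat.planarModel p z x y with
    ⟨p', z', x', y', hpz, hpx, hpy, hxy, hzx, hzy'⟩ |
      ⟨z', p', x', y', hzp, hzx, hzy', hxy, hpx, hpy⟩
  · rw [← hpz, ← hpx, ← hpy, ← hxy,
      dist_sq_eq_of_dist_le_half (by rw [hxy, ← hxz, dist_comm x z]; exact hzx)
        (by rwa [hxy, ← hzy]) p']
  · have hpx' := pow_le_pow_left₀ dist_nonneg hpx 2
    have hpy' := pow_le_pow_left₀ dist_nonneg hpy 2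
    rw [dist_comm p z, ← hzp, dist_comm, ← hxy,
      dist_sq_eq_of_dist_le_half (by rw [hzx, hxy, dist_comm, hxz]) (by rw [hzy', hxy, hzy]) p']
    linarith

theorem PlanarModel.dist_le_of_mem_approxMidpoints {p q x y : α} {ε : ℝ}
    (h : PlanarModel p q x y)
    (hp : p ∈ approxMidpoints x y ε) (hq : q ∈ approxMidpoints x y ε) :
    dist p q ≤ 2 * √(dist x y * ε + ε ^ 2) := by
  obtain ⟨p', q', x', y', hpq, hpx, hpy, hxy, hqx, hqy⟩ := h
  have hp' : p' ∈ approxMidpoints x' y' ε :=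
    ⟨by rw [hxy, dist_comm, hpx, dist_comm]; exact hp.1, by rw [hxy, hpy]; exact hp.2⟩
  have hq' : q' ∈ approxMidpoints x' y' ε :=
    ⟨by rw [hxy, dist_comm]; exact hqx.trans ((dist_comm q x).trans_le hq.1),
      by rw [hxy]; exact hqy.trans hq.2⟩
  have hpm := Real.le_sqrt_of_sq_le (dist_midpoint_sq_le_of_mem_approxMidpoints hp')
  have hqm := Real.le_sqrt_of_sq_le (dist_midpoint_sq_le_of_mem_approxMidpoints hq')
  rw [← hpq, ← hxy]
  linarith [dist_triangle_right p' q' (midpoint ℝ x' y')]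

theorem CAT0Cmp.dist_le_of_mem_approxMidpoints (hcat : CAT0Cmp α) {x y z z' : α} {ε : ℝ}
    (hz : z ∈ approxMidpoints x y ε) (hz' : z' ∈ approxMidpoints x y ε) :
    dist z z' ≤ 2 * √(dist x y * ε + ε ^ 2) := by
  rcases hcat.planarModel z z' x y with h | h
  · exact h.dist_le_of_mem_approxMidpoints hz hz'
  · rw [dist_comm]
    exact h.dist_le_of_mem_approxMidpoints hz' hz

theorem CAT0Cmp.exists_midpoint [CompleteSpace α] (hlen : LengthMid α) (hcat : CAT0Cmp α)
    (x y : α) : ∃ z, dist x z = dist x y / 2 ∧ dist z y = dist x y / 2 := by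
  have hmono : Monotone (approxMidpoints x y) := fun ε ε' h z hz =>
    ⟨hz.1.trans (by linarith), hz.2.trans (by linarith)⟩
  have hcl (ε : ℝ) : IsClosed (approxMidpoints x y ε) :=
    IsClosed.inter (s₁ := {z | dist x z ≤ dist x y / 2 + ε})
      (s₂ := {z | dist z y ≤ dist x y / 2 + ε})
      (isClosed_le (by fun_prop) (by fun_prop)) (isClosed_le (by fun_prop) (by fun_prop))
  have hf : Tendsto (fun ε => 2 * √(dist x y * ε + ε ^ 2)) (𝓝[>] 0) (𝓝 0) :=
    ((by fun_prop : Continuous fun ε : ℝ => 2 * √(dist x y * ε + ε ^ 2)).tendsto' 0 0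
      (by simp)).mono_left nhdsWithin_le_nhds
  obtain ⟨z, hz⟩ := exists_forall_mem_of_dist_le hmono hcl (fun ε hε => hlen x y ε hε)
    (fun _ _ _ hz _ hz' => hcat.dist_le_of_mem_approxMidpoints hz hz') hf
  have hxz : dist x z ≤ dist x y / 2 := le_of_forall_pos_le_add fun ε hε => (hz ε hε).1
  have hzy : dist z y ≤ dist x y / 2 := le_of_forall_pos_le_add fun ε hε => (hz ε hε).2
  have := dist_triangle x z y
  exact ⟨z, le_antisymm hxz (by linarith), le_antisymm hzy (by linarith)⟩

theorem dist_le_of_dist_le_infDist_add [CompleteSpace α] (hlen : LengthMid α) (hcat : CAT0Cmp α)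
    {K : Set α} (hconv : MConvexSet K) {p z₁ z₂ : α} (hz₁ : z₁ ∈ K) (hz₂ : z₂ ∈ K) {δ : ℝ}
    (h₁ : dist p z₁ ≤ Metric.infDist p K + δ) (h₂ : dist p z₂ ≤ Metric.infDist p K + δ) :
    dist z₁ z₂ ≤ 2 * √((Metric.infDist p K + δ) ^ 2 - Metric.infDist p K ^ 2) := by
  obtain ⟨m, hz₁m, hmz₂⟩ := hcat.exists_midpoint hlen z₁ z₂
  have hmK : m ∈ K := hconv z₁ hz₁ z₂ hz₂ m (by rw [hz₁m, hmz₂]; ring)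
  have hCN := hcat.dist_sq_le_of_midpoint hz₁m hmz₂ p
  have hm :=
    pow_le_pow_left₀ Metric.infDist_nonneg (Metric.infDist_le_dist_of_mem (x := p) hmK) 2
  have h₁' := pow_le_pow_left₀ dist_nonneg h₁ 2
  have h₂' := pow_le_pow_left₀ dist_nonneg h₂ 2
  have := Real.le_sqrt_of_sq_le (x := dist z₁ z₂ / 2)
    (y := (Metric.infDist p K + δ) ^ 2 - Metric.infDist p K ^ 2) (by linarith)
  linarith

end CAT0

theorem closest_point_projection_CAT0 {U : Type*} [MetricSpace U] [CompleteSpace U]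
    (hlen : LengthMid U) (hcat : CAT0Cmp U)
    (K : Set U) (hne : K.Nonempty) (hcl : IsClosed K) (hconv : MConvexSet K)
    (p : U) :
    ∃! z : U, z ∈ K ∧ dist p z = Metric.infDist p K := by
  set ℓ := Metric.infDist p K
  have hmono : Monotone fun δ => K ∩ Metric.closedBall p (ℓ + δ) := fun δ δ' h =>
    Set.inter_subset_inter_right K (Metric.closedBall_subset_closedBall (by linarith))
  have hne' (δ : ℝ) (hδ : 0 < δ) : (K ∩ Metric.closedBall p (ℓ + δ)).Nonempty := by
    obtain ⟨z, hzK, hz⟩ := (Metric.infDist_lt_iff hne).mp (lt_add_of_pos_right ℓ hδ)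
    exact ⟨z, hzK, Metric.mem_closedBall'.mpr hz.le⟩
  have hf : Tendsto (fun δ => 2 * √((ℓ + δ) ^ 2 - ℓ ^ 2)) (𝓝[>] 0) (𝓝 0) :=
    ((by fun_prop : Continuous fun δ : ℝ => 2 * √((ℓ + δ) ^ 2 - ℓ ^ 2)).tendsto' 0 0
      (by simp)).mono_left nhdsWithin_le_nhds
  obtain ⟨z, hz⟩ := exists_forall_mem_of_dist_le hmono
    (fun δ => hcl.inter Metric.isClosed_closedBall) hne'
    (fun _ _ _ hz₁ _ hz₂ => dist_le_of_dist_le_infDist_add hlen hcat hconv hz₁.1 hz₂.1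
      (Metric.mem_closedBall'.mp hz₁.2) (Metric.mem_closedBall'.mp hz₂.2)) hf
  have hzK : z ∈ K := (hz 1 one_pos).1
  have hpz : dist p z = ℓ := le_antisymm
    (le_of_forall_pos_le_add fun δ hδ => Metric.mem_closedBall'.mp (hz δ hδ).2)
    (Metric.infDist_le_dist_of_mem hzK)
  refine ⟨z, ⟨hzK, hpz⟩, fun w ⟨hwK, hpw⟩ => dist_le_zero.mp ?_⟩
  simpa using dist_le_of_dist_le_infDist_add hlen hcat hconv hwK hzK (δ := 0)
    (by rw [hpw, add_zero]) (by rw [hpz, add_zero])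
end
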